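/- arXiv:2002.06733 — 4 statements merged into one kernel-verified Lean document; each statement's English description precedes it below -/
import Mathlib

section
/- Define g(x) = (1+x)·log₂(1+x) − x·log₂(x) for x > 0. For fixed η ∈ (0,1) and n̄_B > 0, define C_χ(n̄_S) = g(η·n̄_S + (1−η)·n̄_B) − g((1−η)·n̄_B). Then for all n̄_S ≥ 0, C_χ(n̄_S) ≤ η·n̄_S·log₂(1 + 1/((1−η)·n̄_B)). -/
/-!
Measured in nats, `g` is `thermalEntropy`, whose derivative `log (1 + 1 / x)` is decreasing on
`(0, ∞)`. Hence `thermalEntropy` is concave there and lies below its tangent line at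
`(1 - η) n̄_B`, which is the claimed bound after dividing by `log 2`.
-/

open Real Set

theorem ConcaveOn.le_add_deriv_mul_sub {S : Set ℝ} {f : ℝ → ℝ} {x y f' : ℝ}
    (hf : ConcaveOn ℝ S f) (hx : x ∈ S) (hy : y ∈ S) (hf' : HasDerivAt f f' x) :
    f y ≤ f x + f' * (y - x) := by
  rcases lt_trichotomy y x with hyx | rfl | hxy
  · have h := hf.le_slope_of_hasDerivAt hy hx hyx hf'
    rw [slope_def_field, le_div_iff₀ (sub_pos.mpr hyx)] at h
    linarith
  · simp
  · have h := hf.slope_le_of_hasDerivAt hx hy hxy hf'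
    rw [slope_def_field, div_le_iff₀ (sub_pos.mpr hxy)] at h
    linarith

noncomputable def thermalEntropy (x : ℝ) : ℝ :=
  (1 + x) * log (1 + x) - x * log x

theorem hasDerivAt_thermalEntropy {x : ℝ} (hx : 0 < x) :
    HasDerivAt thermalEntropy (log (1 + 1 / x)) x := by
  have h1x : 0 < 1 + x := by linarith
  have hshift : HasDerivAt (fun y : ℝ => (1 + y) * log (1 + y)) (log (1 + x) + 1) x := by
    simpa [Function.comp_def] using
      (hasDerivAt_mul_log h1x.ne').comp x ((hasDerivAt_id x).const_add 1)
  refine (hshift.sub (hasDerivAt_mul_log hx.ne')).congr_deriv ?_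
  rw [one_add_div hx.ne', add_comm x 1, log_div h1x.ne' hx.ne']
  ring

theorem concaveOn_thermalEntropy : ConcaveOn ℝ (Ioi 0) thermalEntropy := by
  have hderiv : ∀ x ∈ Ioi (0 : ℝ), HasDerivAt thermalEntropy (log (1 + 1 / x)) x :=
    fun x hx => hasDerivAt_thermalEntropy hx
  refine AntitoneOn.concaveOn_of_deriv (convex_Ioi 0)
    (fun x hx => (hderiv x hx).continuousAt.continuousWithinAt) ?_ ?_
  · rw [interior_Ioi]
    exact fun x hx => (hderiv x hx).differentiableAt.differentiableWithinAt
  · rw [interior_Ioi]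
    intro x hx y hy hxy
    rw [(hderiv x hx).deriv, (hderiv y hy).deriv]
    have hy_pos : (0 : ℝ) < y := hy
    gcongr

theorem thermalEntropy_add_sub_le {a t : ℝ} (ha : 0 < a) (ht : 0 ≤ t) :
    thermalEntropy (a + t) - thermalEntropy a ≤ t * log (1 + 1 / a) := by
  have h := concaveOn_thermalEntropy.le_add_deriv_mul_sub ha
    (show 0 < a + t by linarith) (hasDerivAt_thermalEntropy ha)
  linarith

theorem stmt_2 (η nB : ℝ) (hη : η ∈ Set.Ioo (0:ℝ) 1) (hnB : 0 < nB)
    (g : ℝ → ℝ) (hg : ∀ x, g x = (1 + x) * Real.logb 2 (1 + x) - x * Real.logb 2 x)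
    (nS : ℝ) (hnS : 0 ≤ nS) :
    g (η * nS + (1 - η) * nB) - g ((1 - η) * nB) ≤
      η * nS * Real.logb 2 (1 + 1 / ((1 - η) * nB)) := by
  obtain ⟨hη0, hη1⟩ := hη
  have hg_nats : ∀ x, g x = thermalEntropy x / log 2 := fun x => by
    rw [hg, thermalEntropy, logb, logb]
    ring
  have hbound := thermalEntropy_add_sub_le (mul_pos (sub_pos.mpr hη1) hnB)
    (mul_nonneg hη0.le hnS)
  rw [hg_nats, hg_nats, logb, ← sub_div, mul_div_assoc', add_comm]
  exact div_le_div_of_nonneg_right hbound (log_pos one_lt_two).le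
end

section
/- Let n̄_T > 0 and τ_k = n̄_T^k/(1+n̄_T)^{k+1} for k ≥ 0. Then Σ_{k≥0} (k+1)·τ_{k+1}·ln(τ_k) = 2·n̄_T²·ln(n̄_T) − 2·n̄_T²·ln(1+n̄_T) − n̄_T·ln(1+n̄_T). -/
/-!
Writing `r = n̄_T / (1 + n̄_T)`, the thermal distribution is geometric, `τ_k = (1 - r) r^k`, so
`ln τ_k = ln (1 - r) + k ln r` is affine in `k`. The series therefore splits into the two moment
series `∑ (k + 1) r^k = (1 - r)⁻²` and `∑ k (k + 1) r^k = 2 r (1 - r)⁻³`, and `r / (1 - r) = n̄_T`.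
-/

open Real

section MomentsOfGeometric

variable {𝕜 : Type*} [NormedField 𝕜] {r : 𝕜}

theorem hasSum_coe_add_one_mul_geometric (hr : ‖r‖ < 1) :
    HasSum (fun n : ℕ => ((n : 𝕜) + 1) * r ^ n) (1 / (1 - r) ^ 2) := by
  simpa using hasSum_choose_mul_geometric_of_norm_lt_one 1 hr

theorem hasSum_coe_mul_coe_add_one_mul_geometric (hr : ‖r‖ < 1) :
    HasSum (fun n : ℕ => (n : 𝕜) * (n + 1) * r ^ n) (2 * r / (1 - r) ^ 3) := by
  have h1r : 1 - r ≠ 0 := sub_ne_zero.2 fun h => by simp [← h] at hr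
  have hchoose_two (n : ℕ) : ((n + 2).choose 2 : 𝕜) * 2 = (n + 2) * (n + 1) := by
    have hnat : (n + 2).choose 2 * 2 = (n + 2) * (n + 1) := by
      simpa using (Nat.add_one_mul_choose_eq (n + 1) 1).symm
    simpa using congrArg (Nat.cast : ℕ → 𝕜) hnat
  have hchoose := (hasSum_choose_mul_geometric_of_norm_lt_one 2 hr).mul_left 2
  convert! hchoose.sub ((hasSum_coe_add_one_mul_geometric hr).mul_left 2) using 1
  · ext n
    linear_combination (-r ^ n) * hchoose_two n
  · field_simp
    ring

end MomentsOfGeometric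

theorem hasSum_coe_add_one_mul_geometric_succ_mul_log_geometric {r : ℝ} (h0 : 0 < r)
    (h1 : r < 1) :
    HasSum (fun k : ℕ => ((k : ℝ) + 1) * ((1 - r) * r ^ (k + 1)) * log ((1 - r) * r ^ k))
      (2 * (r / (1 - r)) ^ 2 * log r + r / (1 - r) * log (1 - r)) := by
  have hr : ‖r‖ < 1 := by rwa [norm_of_nonneg h0.le]
  have h1r : 1 - r ≠ 0 := by linarith
  have hlog (k : ℕ) : log ((1 - r) * r ^ k) = log (1 - r) + k * log r := by
    rw [log_mul h1r (by positivity), log_pow]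
  have hmoments := ((hasSum_coe_mul_coe_add_one_mul_geometric hr).mul_left (log r)).add
    ((hasSum_coe_add_one_mul_geometric hr).mul_left (log (1 - r)))
  convert! hmoments.mul_left ((1 - r) * r) using 1
  · ext k
    rw [hlog]
    ring
  · field_simp

theorem stmt_7 (nT : ℝ) (hnT : 0 < nT)
    (τ : ℕ → ℝ) (hτ : ∀ k, τ k = nT ^ k / (1 + nT) ^ (k + 1)) :
    ∑' k : ℕ, ((k : ℝ) + 1) * τ (k + 1) * Real.log (τ k) =
      2 * nT ^ 2 * Real.log nT - 2 * nT ^ 2 * Real.log (1 + nT) - nT * Real.log (1 + nT) := by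
  set r := nT / (1 + nT) with hr
  have h1n : 0 < 1 + nT := by linarith
  have h1r : 1 - r = 1 / (1 + nT) := by rw [hr]; field_simp; ring
  have hτ_geometric : τ = fun k => (1 - r) * r ^ k := by
    ext k
    rw [hτ, h1r, div_pow, pow_succ]
    field_simp
  have hodds : r / (1 - r) = nT := by rw [h1r, hr]; field_simp
  have hr1 : r < 1 := (div_lt_one h1n).2 (by linarith)
  rw [hτ_geometric,
    (hasSum_coe_add_one_mul_geometric_succ_mul_log_geometric (by positivity) hr1).tsum_eq, hodds,
    h1r, log_div hnT.ne' h1n.ne', one_div, log_inv]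
  ring
end

section
/- Let w₁₁, w₂₂ > 1/2, w₁₂ ∈ ℝ with (w₁₁+w₂₂)² > 4w₁₂², and define w = √(w₁₁ − 2w₁₂ + w₂₂)/((w₁₁+w₂₂)² − 4w₁₂²)^{1/4} (assuming w₁₁ − 2w₁₂ + w₂₂ > 0), s_± = (w ± 1/w)/2, λ₁,λ₂ as before, and the 4×4 matrix S = [[s₊, s₋, 0, 0],[−s₋, −s₊, 0, 0],[0,0,s₊,−s₋],[0,0,s₋,−s₊]]. Then S is symplectic with respect to Ω = [[0,I₂],[−I₂,0]] (i.e., S·Ω·Sᵀ = Ω) and S·diag(λ₁,λ₂,λ₁,λ₂)·Sᵀ = [[w₁₁,w₁₂,0,0],[w₁₂,w₂₂,0,0],[0,0,w₁₁,−w₁₂],[0,0,−w₁₂,w₂₂]]. -/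
/-!
Write `w = e^r`, so that `s₊ = cosh r`, `s₋ = sinh r` and `S` is a two-mode squeezer; it is
symplectic because `cosh² r - sinh² r = 1`. Conjugating `diag(λ₁, λ₂, λ₁, λ₂)` by `S` gives blocks
whose entries, using `λ₁ + λ₂ = √A` and `λ₁ - λ₂ = w₁₁ - w₂₂` with `A = (w₁₁ + w₂₂)² - 4w₁₂²`,
reduce to `√A w² = w₁₁ - 2w₁₂ + w₂₂` and `√A / w² = w₁₁ + 2w₁₂ + w₂₂`. The first is the
definition of `w`; the second follows from it because `A = (w₁₁ - 2w₁₂ + w₂₂)(w₁₁ + 2w₁₂ + w₂₂)`.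
-/

open Matrix

section TwoMode

variable {R : Type*} [CommRing R]

def twoModeSqueezer (sp sm : R) : Matrix (Fin 4) (Fin 4) R :=
  !![sp, sm, 0, 0; -sm, -sp, 0, 0; 0, 0, sp, -sm; 0, 0, sm, -sp]

def symplecticFormQQPP : Matrix (Fin 4) (Fin 4) R :=
  !![0, 0, 1, 0; 0, 0, 0, 1; -1, 0, 0, 0; 0, -1, 0, 0]

theorem twoModeSqueezer_mul_symplecticFormQQPP_mul_transpose (sp sm : R) :
    twoModeSqueezer sp sm * symplecticFormQQPP * (twoModeSqueezer sp sm)ᵀ =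
      (sp ^ 2 - sm ^ 2) • symplecticFormQQPP := by
  ext i j
  fin_cases i <;> fin_cases j <;>
    simp [twoModeSqueezer, symplecticFormQQPP, mul_apply, Fin.sum_univ_four] <;> ring

theorem twoModeSqueezer_mul_diagonal_mul_transpose (sp sm l₁ l₂ : R) :
    twoModeSqueezer sp sm * !![l₁, 0, 0, 0; 0, l₂, 0, 0; 0, 0, l₁, 0; 0, 0, 0, l₂] *
        (twoModeSqueezer sp sm)ᵀ =
      !![sp ^ 2 * l₁ + sm ^ 2 * l₂, -(sp * sm * (l₁ + l₂)), 0, 0;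
        -(sp * sm * (l₁ + l₂)), sm ^ 2 * l₁ + sp ^ 2 * l₂, 0, 0;
        0, 0, sp ^ 2 * l₁ + sm ^ 2 * l₂, sp * sm * (l₁ + l₂);
        0, 0, sp * sm * (l₁ + l₂), sm ^ 2 * l₁ + sp ^ 2 * l₂] := by
  ext i j
  fin_cases i <;> fin_cases j <;>
    simp [twoModeSqueezer, mul_apply, Fin.sum_univ_four] <;> ring

end TwoMode

theorem rpow_one_div_four_sq {x : ℝ} (hx : 0 ≤ x) : (x ^ (1 / 4 : ℝ)) ^ 2 = √x := by
  rw [Real.sqrt_eq_rpow, ← Real.rpow_natCast, ← Real.rpow_mul hx]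
  norm_num

section Squeezing

variable {K : Type*} [Field K] [CharZero K]

theorem add_inv_div_two_sq_sub_sub_inv_div_two_sq {w : K} (hw : w ≠ 0) :
    ((w + 1 / w) / 2) ^ 2 - ((w - 1 / w) / 2) ^ 2 = 1 := by
  field_simp
  ring

theorem twoModeSqueezer_conj_diagonal_entries {w l₁ l₂ w₁₁ w₂₂ w₁₂ : K} (hw : w ≠ 0)
    (hdiff : l₁ - l₂ = w₁₁ - w₂₂) (hminus : (l₁ + l₂) * w ^ 2 = w₁₁ - 2 * w₁₂ + w₂₂)
    (hplus : l₁ + l₂ = w ^ 2 * (w₁₁ + 2 * w₁₂ + w₂₂)) :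
    ((w + 1 / w) / 2) ^ 2 * l₁ + ((w - 1 / w) / 2) ^ 2 * l₂ = w₁₁ ∧
      ((w - 1 / w) / 2) ^ 2 * l₁ + ((w + 1 / w) / 2) ^ 2 * l₂ = w₂₂ ∧
      (w + 1 / w) / 2 * ((w - 1 / w) / 2) * (l₁ + l₂) = -w₁₂ := by
  refine ⟨?_, ?_, ?_⟩ <;> field_simp
  · linear_combination 2 * w ^ 2 * hdiff + w ^ 2 * hminus + hplus
  · linear_combination -2 * w ^ 2 * hdiff + w ^ 2 * hminus + hplus
  · linear_combination w ^ 2 * hminus - hplus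

end Squeezing

theorem sqrt_mul_div_rpow_one_div_four_sq {A B : ℝ} (hA : 0 < A) (hB : 0 ≤ B) :
    √A * (√B / A ^ (1 / 4 : ℝ)) ^ 2 = B := by
  have hA4 : A ^ (1 / 4 : ℝ) ≠ 0 := (Real.rpow_pos_of_pos hA _).ne'
  rw [div_pow, Real.sq_sqrt hB, rpow_one_div_four_sq hA.le]
  field_simp [(Real.sqrt_pos.mpr hA).ne']

theorem stmt_13_general (w11 w22 w12 : ℝ)
    (hpos : 4 * w12 ^ 2 < (w11 + w22) ^ 2)
    (hw : 0 < w11 - 2 * w12 + w22)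
    (w sp sm lam1 lam2 : ℝ)
    (hwdef : w = Real.sqrt (w11 - 2 * w12 + w22) / ((w11 + w22) ^ 2 - 4 * w12 ^ 2) ^ ((1:ℝ)/4))
    (hsp : sp = (w + 1 / w) / 2) (hsm : sm = (w - 1 / w) / 2)
    (hlam1 : lam1 = (Real.sqrt ((w11 + w22) ^ 2 - 4 * w12 ^ 2) + (w11 - w22)) / 2)
    (hlam2 : lam2 = (Real.sqrt ((w11 + w22) ^ 2 - 4 * w12 ^ 2) - (w11 - w22)) / 2)
    (S Ω D Sig : Matrix (Fin 4) (Fin 4) ℝ)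
    (hS : S = !![sp, sm, 0, 0; -sm, -sp, 0, 0; 0, 0, sp, -sm; 0, 0, sm, -sp])
    (hΩ : Ω = !![0, 0, 1, 0; 0, 0, 0, 1; -1, 0, 0, 0; 0, -1, 0, 0])
    (hD : D = !![lam1, 0, 0, 0; 0, lam2, 0, 0; 0, 0, lam1, 0; 0, 0, 0, lam2])
    (hSig : Sig = !![w11, w12, 0, 0; w12, w22, 0, 0; 0, 0, w11, -w12; 0, 0, -w12, w22]) :
    S * Ω * S.transpose = Ω ∧ S * D * S.transpose = Sig := by
  set A := (w11 + w22) ^ 2 - 4 * w12 ^ 2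
  have hA : 0 < A := by linarith
  have hsum : lam1 + lam2 = √A := by rw [hlam1, hlam2]; ring
  have hdiff : lam1 - lam2 = w11 - w22 := by rw [hlam1, hlam2]; ring
  have hminus : (lam1 + lam2) * w ^ 2 = w11 - 2 * w12 + w22 := by
    rw [hsum, hwdef]; exact sqrt_mul_div_rpow_one_div_four_sq hA hw.le
  have hplus : lam1 + lam2 = w ^ 2 * (w11 + 2 * w12 + w22) := by
    refine mul_left_cancel₀ (hsum ▸ (Real.sqrt_pos.mpr hA).ne') ?_
    rw [← mul_assoc, hminus, ← pow_two, hsum, Real.sq_sqrt hA.le]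
    ring
  have hw0 : w ≠ 0 := by rintro rfl; linarith [hminus]
  obtain ⟨h11, h22, h12⟩ := twoModeSqueezer_conj_diagonal_entries hw0 hdiff hminus hplus
  subst hS hΩ hD hSig hsp hsm
  constructor
  · exact (twoModeSqueezer_mul_symplecticFormQQPP_mul_transpose _ _).trans <| by
      rw [add_inv_div_two_sq_sub_sub_inv_div_two_sq hw0, one_smul]; rfl
  · exact (twoModeSqueezer_mul_diagonal_mul_transpose _ _ _ _).trans <| by
      rw [h11, h22, h12, neg_neg]

theorem stmt_13 (w11 w22 w12 : ℝ) (h11 : 1 / 2 < w11) (h22 : 1 / 2 < w22)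
    (hpos : 4 * w12 ^ 2 < (w11 + w22) ^ 2)
    (hw : 0 < w11 - 2 * w12 + w22)
    (w sp sm lam1 lam2 : ℝ)
    (hwdef : w = Real.sqrt (w11 - 2 * w12 + w22) / ((w11 + w22) ^ 2 - 4 * w12 ^ 2) ^ ((1:ℝ)/4))
    (hsp : sp = (w + 1 / w) / 2) (hsm : sm = (w - 1 / w) / 2)
    (hlam1 : lam1 = (Real.sqrt ((w11 + w22) ^ 2 - 4 * w12 ^ 2) + (w11 - w22)) / 2)
    (hlam2 : lam2 = (Real.sqrt ((w11 + w22) ^ 2 - 4 * w12 ^ 2) - (w11 - w22)) / 2)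
    (S Ω D Sig : Matrix (Fin 4) (Fin 4) ℝ)
    (hS : S = !![sp, sm, 0, 0; -sm, -sp, 0, 0; 0, 0, sp, -sm; 0, 0, sm, -sp])
    (hΩ : Ω = !![0, 0, 1, 0; 0, 0, 0, 1; -1, 0, 0, 0; 0, -1, 0, 0])
    (hD : D = !![lam1, 0, 0, 0; 0, lam2, 0, 0; 0, 0, lam1, 0; 0, 0, 0, lam2])
    (hSig : Sig = !![w11, w12, 0, 0; w12, w22, 0, 0; 0, 0, w11, -w12; 0, 0, -w12, w22]) :
    S * Ω * S.transpose = Ω ∧ S * D * S.transpose = Sig :=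
  stmt_13_general w11 w22 w12 hpos hw w sp sm lam1 lam2 hwdef hsp hsm hlam1 hlam2 S Ω D Sig hS hΩ hD
    hSig
end

section
/- Let n̄_T > 0 and for u ∈ ℝ define the sum S₂(u) as the evaluation of d²S(ρ̄)/du² at u = 0, given by Tr[−(2/n̄_T²)·(â ρ_{n̄_T} â†)·log₂ ρ_{n̄_T} + (2/n̄_T)·ρ_{n̄_T}·log₂ ρ_{n̄_T}], where ρ_{n̄_T} = Σ_k τ_k |k⟩⟨k| with τ_k = n̄_T^k/(1+n̄_T)^{k+1} and â|k⟩ = √k|k−1⟩. Expressed as series: S₂ = −(2/n̄_T²)·Σ_k (k+1)·τ_{k+1}·log₂ τ_k + (2/n̄_T)·Σ_k τ_k·log₂ τ_k. Then S₂ = 2·log₂(1 + 1/n̄_T). -/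
/-!
The thermal weights form a geometric distribution, `τ k = (1 + n̄)⁻¹ q ^ k` with
`q = n̄ / (1 + n̄)`, so `log₂ τ k = a + k c` is affine in `k` with slope `c = log₂ q`.
Both series then reduce to the first two moments of a geometric series,
which give `a + c n̄` and `n̄ (a + 2 c n̄)`; the constant `a` cancels and `S₂ = -2 c`.
-/

section GeometricMoments

variable {𝕜 : Type*} [NormedField 𝕜] {r : 𝕜}

theorem hasSum_geometric_mul_affine (hr : ‖r‖ < 1) (a c : 𝕜) :
    HasSum (fun n : ℕ => r ^ n * (a + n * c)) (a / (1 - r) + c * r / (1 - r) ^ 2) := by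
  have h0 : HasSum (fun n : ℕ => r ^ n) (1 / (1 - r)) := by
    simpa using hasSum_geometric_of_norm_lt_one hr
  rw [show a / (1 - r) + c * r / (1 - r) ^ 2 = a * (1 / (1 - r)) + c * (r / (1 - r) ^ 2) by ring]
  exact ((h0.mul_left a).add ((hasSum_coe_mul_geometric_of_norm_lt_one hr).mul_left c)).congr_fun
    fun n => by ring

theorem hasSum_succ_mul_geometric_mul_affine (hr : ‖r‖ < 1) (a c : 𝕜) :
    HasSum (fun n : ℕ => (n + 1) * r ^ n * (a + n * c))
      ((a - 2 * c) / (1 - r) ^ 2 + 2 * c / (1 - r) ^ 3) := by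
  -- `(n + 1) (a + n c) = (a - 2c) C(n+1, 1) + 2c C(n+2, 2)`
  have hchoose (n : ℕ) : (((n + 2).choose 2 : ℕ) : 𝕜) * 2 = (n + 2) * (n + 1) := by
    have h : (n + 2).choose 2 * 2 = (n + 2) * (n + 1) := by
      simpa using (Nat.add_one_mul_choose_eq (n + 1) 1).symm
    simpa using congrArg (Nat.cast : ℕ → 𝕜) h
  rw [show (a - 2 * c) / (1 - r) ^ 2 + 2 * c / (1 - r) ^ 3
      = (a - 2 * c) * (1 / (1 - r) ^ (1 + 1)) + c * (1 / (1 - r) ^ (2 + 1) * 2) by ring]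
  refine (((hasSum_choose_mul_geometric_of_norm_lt_one 1 hr).mul_left (a - 2 * c)).add
    (((hasSum_choose_mul_geometric_of_norm_lt_one 2 hr).mul_right 2).mul_left c)).congr_fun
    fun n => ?_
  rw [Nat.choose_one_right, mul_right_comm _ _ (2 : 𝕜), hchoose]
  push_cast
  ring

end GeometricMoments

section ThermalState

variable {n : ℝ}

theorem thermal_eq_geometric (hn : 0 ≤ n) (k : ℕ) :
    n ^ k / (1 + n) ^ (k + 1) = (1 + n)⁻¹ * (n / (1 + n)) ^ k := by
  have : (1 + n) ≠ 0 := by positivity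
  rw [div_pow, pow_succ]
  field_simp

theorem norm_thermal_ratio_lt_one (hn : 0 ≤ n) : ‖n / (1 + n)‖ < 1 := by
  rw [Real.norm_of_nonneg (by positivity), div_lt_one (by positivity)]
  linarith

theorem logb_thermal (hn : 0 < n) (b : ℝ) (k : ℕ) :
    Real.logb b (n ^ k / (1 + n) ^ (k + 1))
      = -Real.logb b (1 + n) + k * Real.logb b (n / (1 + n)) := by
  have h1n : (1 + n) ≠ 0 := by positivity
  rw [Real.logb_div (by positivity) (pow_ne_zero _ h1n), Real.logb_pow, Real.logb_pow,
    Real.logb_div hn.ne' h1n]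
  push_cast
  ring

theorem hasSum_thermal_mul_affine (hn : 0 ≤ n) (a c : ℝ) :
    HasSum (fun k : ℕ => n ^ k / (1 + n) ^ (k + 1) * (a + k * c)) (a + c * n) := by
  have h1n : (1 + n) ≠ 0 := by positivity
  have h := (hasSum_geometric_mul_affine (norm_thermal_ratio_lt_one hn) a c).mul_left (1 + n)⁻¹
  rw [show (1 + n)⁻¹ * (a / (1 - n / (1 + n)) + c * (n / (1 + n)) / (1 - n / (1 + n)) ^ 2)
      = a + c * n by field_simp; ring] at h
  exact h.congr_fun fun k => by rw [thermal_eq_geometric hn, mul_assoc]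

theorem hasSum_succ_mul_thermal_succ_mul_affine (hn : 0 ≤ n) (a c : ℝ) :
    HasSum (fun k : ℕ => (k + 1) * (n ^ (k + 1) / (1 + n) ^ (k + 1 + 1)) * (a + k * c))
      (n * (a + 2 * c * n)) := by
  have h1n : (1 + n) ≠ 0 := by positivity
  have h := (hasSum_succ_mul_geometric_mul_affine (norm_thermal_ratio_lt_one hn) a c).mul_left
    ((1 + n)⁻¹ * (n / (1 + n)))
  rw [show (1 + n)⁻¹ * (n / (1 + n)) * ((a - 2 * c) / (1 - n / (1 + n)) ^ 2
      + 2 * c / (1 - n / (1 + n)) ^ 3) = n * (a + 2 * c * n) by field_simp; ring] at h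
  exact h.congr_fun fun k => by rw [thermal_eq_geometric hn, pow_succ]; ring

end ThermalState

theorem stmt_16 (nT : ℝ) (hnT : 0 < nT)
    (τ : ℕ → ℝ) (hτ : ∀ k, τ k = nT ^ k / (1 + nT) ^ (k + 1)) :
    -(2 / nT ^ 2) * ∑' k : ℕ, ((k : ℝ) + 1) * τ (k + 1) * Real.logb 2 (τ k)
      + (2 / nT) * ∑' k : ℕ, τ k * Real.logb 2 (τ k)
      = 2 * Real.logb 2 (1 + 1 / nT) := by
  set a := -Real.logb 2 (1 + nT)
  set c := Real.logb 2 (nT / (1 + nT))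
  have hlog (k : ℕ) : Real.logb 2 (τ k) = a + k * c := by rw [hτ, logb_thermal hnT]
  have hS₁ :
      ∑' k : ℕ, ((k : ℝ) + 1) * τ (k + 1) * Real.logb 2 (τ k) = nT * (a + 2 * c * nT) := by
    simp_rw [hlog, hτ]
    exact (hasSum_succ_mul_thermal_succ_mul_affine hnT.le a c).tsum_eq
  have hS₂ : ∑' k : ℕ, τ k * Real.logb 2 (τ k) = a + c * nT := by
    simp_rw [hlog, hτ]
    exact (hasSum_thermal_mul_affine hnT.le a c).tsum_eq
  have hc : Real.logb 2 (1 + 1 / nT) = -c := by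
    rw [← Real.logb_inv, inv_div, add_div, div_self hnT.ne', one_div, add_comm]
  rw [hS₁, hS₂, hc]
  field_simp
  ring
end
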